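/- arXiv:2303.05056 — 3 statements merged into one kernel-verified Lean document; each statement's English description precedes it below -/
import Mathlib

section
/- Let n be a positive integer with n ≡ 0 (mod 4), and let r₁, r₂ ∈ {1, −1}ⁿ ⊂ ℤⁿ be vectors whose standard inner product over ℤ is zero. Then the number of coordinates equal to 1 in r₁ is congruent modulo 2 to the number of coordinates equal to 1 in r₂. -/
/-!
For `x, y ∈ {1, -1}` the product `(x + 1) * (y + 1)` lies in `{0, 4}`. Summing over the coordinates,
`∑ (r₁ i + 1) * (r₂ i + 1) = ⟪r₁, r₂⟫ + 2 (n₁(r₁) + n₁(r₂)) - n`, since `∑ r i = 2 n₁(r) - n`.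
With `⟪r₁, r₂⟫ = 0` and `4 ∣ n` this gives `4 ∣ 2 (n₁(r₁) + n₁(r₂))`.
-/

open Finset

section SignVector

variable {ι : Type*} [Fintype ι]

lemma sum_eq_two_mul_card_sub {r : ι → ℤ} (hr : ∀ i, r i = 1 ∨ r i = -1) :
    ∑ i, r i = 2 * ((univ.filter fun i => r i = 1).card : ℤ) - Fintype.card ι := by
  have hsplit : ∀ i, r i = 2 * (if r i = 1 then 1 else 0) - 1 := fun i => by
    rcases hr i with h | h <;> simp [h]
  rw [sum_congr rfl fun i _ => hsplit i, sum_sub_distrib, ← mul_sum, sum_boole]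
  simp

lemma sum_add_one_mul_add_one {r₁ r₂ : ι → ℤ} (h₁ : ∀ i, r₁ i = 1 ∨ r₁ i = -1)
    (h₂ : ∀ i, r₂ i = 1 ∨ r₂ i = -1) :
    ∑ i, (r₁ i + 1) * (r₂ i + 1) = ∑ i, r₁ i * r₂ i
      + 2 * ((univ.filter fun i => r₁ i = 1).card + (univ.filter fun i => r₂ i = 1).card : ℤ)
      - Fintype.card ι := by
  have hexpand : ∀ i, (r₁ i + 1) * (r₂ i + 1) = r₁ i * r₂ i + r₁ i + r₂ i + 1 := fun i => by ring
  simp only [hexpand, sum_add_distrib, sum_eq_two_mul_card_sub h₁, sum_eq_two_mul_card_sub h₂,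
    sum_const, card_univ, nsmul_eq_mul, mul_one]
  ring

lemma four_dvd_add_one_mul_add_one {x y : ℤ} (hx : x = 1 ∨ x = -1) (hy : y = 1 ∨ y = -1) :
    4 ∣ (x + 1) * (y + 1) := by
  rcases hx with rfl | rfl <;> rcases hy with rfl | rfl <;> norm_num

end SignVector

theorem hadamard_orthogonal_parity_general (n : ℕ) (h4 : n % 4 = 0)
    (r₁ r₂ : Fin n → ℤ)
    (h₁ : ∀ i, r₁ i = 1 ∨ r₁ i = -1)
    (h₂ : ∀ i, r₂ i = 1 ∨ r₂ i = -1)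
    (horth : ∑ i, r₁ i * r₂ i = 0) :
    (Finset.univ.filter fun i => r₁ i = 1).card % 2
      = (Finset.univ.filter fun i => r₂ i = 1).card % 2 := by
  have hdvd : (4 : ℤ) ∣ ∑ i, (r₁ i + 1) * (r₂ i + 1) :=
    dvd_sum fun i _ => four_dvd_add_one_mul_add_one (h₁ i) (h₂ i)
  rw [sum_add_one_mul_add_one h₁ h₂, horth, Fintype.card_fin] at hdvd
  omega

theorem hadamard_orthogonal_parity (n : ℕ) (hn : 0 < n) (h4 : n % 4 = 0)
    (r₁ r₂ : Fin n → ℤ)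
    (h₁ : ∀ i, r₁ i = 1 ∨ r₁ i = -1)
    (h₂ : ∀ i, r₂ i = 1 ∨ r₂ i = -1)
    (horth : ∑ i, r₁ i * r₂ i = 0) :
    (Finset.univ.filter fun i => r₁ i = 1).card % 2
      = (Finset.univ.filter fun i => r₂ i = 1).card % 2 :=
  hadamard_orthogonal_parity_general n h4 r₁ r₂ h₁ h₂ horth
end

section
/- If H is a Hadamard matrix of order n with n ≥ 3, then n is divisible by 4. -/
/-- A Hadamard matrix of order `n`: entries `±1` and `H * Hᵀ = n • I`. -/
def IsHadamard {n : ℕ} (H : Matrix (Fin n) (Fin n) ℤ) : Prop :=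
  (∀ i j, H i j = 1 ∨ H i j = -1) ∧
    H * H.transpose = (n : ℤ) • (1 : Matrix (Fin n) (Fin n) ℤ)

/-!
For three pairwise orthogonal `±1` vectors `u, v, w` of length `m`, each summand of
`∑ i, (1 + u i * v i) * (1 + u i * w i)` is `0` or `4`, while expanding it (using `u i ^ 2 = 1`)
gives `m + u ⬝ᵥ v + u ⬝ᵥ w + v ⬝ᵥ w = m`. Three distinct rows of a Hadamard matrix are such vectors.
-/

lemma four_dvd_one_add_mul_mul_one_add_mul {a b c : ℤ} (ha : a = 1 ∨ a = -1)
    (hb : b = 1 ∨ b = -1) (hc : c = 1 ∨ c = -1) : 4 ∣ (1 + a * b) * (1 + a * c) := by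
  rcases ha with rfl | rfl <;> rcases hb with rfl | rfl <;> rcases hc with rfl | rfl <;> decide

lemma one_add_mul_mul_one_add_mul_of_mul_self_eq_one {a : ℤ} (ha : a * a = 1) (b c : ℤ) :
    (1 + a * b) * (1 + a * c) = 1 + a * b + a * c + b * c := by
  linear_combination b * c * ha

theorem four_dvd_card_of_pairwise_orthogonal {ι : Type*} [Fintype ι] {u v w : ι → ℤ}
    (hu : ∀ i, u i = 1 ∨ u i = -1) (hv : ∀ i, v i = 1 ∨ v i = -1) (hw : ∀ i, w i = 1 ∨ w i = -1)
    (huv : u ⬝ᵥ v = 0) (huw : u ⬝ᵥ w = 0) (hvw : v ⬝ᵥ w = 0) : 4 ∣ Fintype.card ι := by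
  have hsum : ∑ i, (1 + u i * v i) * (1 + u i * w i) = Fintype.card ι := by
    have hu2 i : u i * u i = 1 := by rcases hu i with h | h <;> simp [h]
    calc ∑ i, (1 + u i * v i) * (1 + u i * w i)
        = ∑ i, (1 + u i * v i + u i * w i + v i * w i) :=
          Finset.sum_congr rfl fun i _ => one_add_mul_mul_one_add_mul_of_mul_self_eq_one (hu2 i) _ _
      _ = Fintype.card ι + u ⬝ᵥ v + u ⬝ᵥ w + v ⬝ᵥ w := by
          simp only [Finset.sum_add_distrib, dotProduct, Finset.sum_const, Finset.card_univ,
            nsmul_eq_mul, mul_one]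
      _ = Fintype.card ι := by rw [huv, huw, hvw]; ring
  have h4 : (4 : ℤ) ∣ Fintype.card ι :=
    hsum ▸ Finset.dvd_sum fun i _ => four_dvd_one_add_mul_mul_one_add_mul (hu i) (hv i) (hw i)
  exact_mod_cast h4

lemma IsHadamard.row_dotProduct_row_eq_zero {n : ℕ} {H : Matrix (Fin n) (Fin n) ℤ}
    (hH : IsHadamard H) {i k : Fin n} (hik : i ≠ k) : H i ⬝ᵥ H k = 0 := by
  simpa [Matrix.mul_apply', hik] using congrFun (congrFun hH.2 i) k

theorem hadamard_order_div_four (n : ℕ) (H : Matrix (Fin n) (Fin n) ℤ)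
    (hH : IsHadamard H) (hn : 3 ≤ n) : 4 ∣ n := by
  let i₀ : Fin n := ⟨0, by omega⟩
  let i₁ : Fin n := ⟨1, by omega⟩
  let i₂ : Fin n := ⟨2, by omega⟩
  have h := four_dvd_card_of_pairwise_orthogonal (hH.1 i₀) (hH.1 i₁) (hH.1 i₂)
    (hH.row_dotProduct_row_eq_zero (by simp [i₀, i₁, Fin.ext_iff]))
    (hH.row_dotProduct_row_eq_zero (by simp [i₀, i₂, Fin.ext_iff]))
    (hH.row_dotProduct_row_eq_zero (by simp [i₁, i₂, Fin.ext_iff]))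
  simpa using h
end

section
/- If C is a self-dual code over 𝔽₃ of length n (i.e., C = C⊥ with respect to the standard inner product on 𝔽₃ⁿ), then n is divisible by 4. -/
/-- The dual code of a ternary code, with respect to the standard inner product. -/
def dualCode {ι : Type*} [Fintype ι] (C : Submodule (ZMod 3) (ι → ZMod 3)) :
    Submodule (ZMod 3) (ι → ZMod 3) where
  carrier := {x | ∀ y ∈ C, ∑ i, x i * y i = 0}
  add_mem' := by
    intro a b ha hb y hy
    simp only [Set.mem_setOf_eq] at *
    simp [Pi.add_apply, add_mul, Finset.sum_add_distrib, ha y hy, hb y hy]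
  zero_mem' := by intro y hy; simp
  smul_mem' := by
    intro c x hx y hy
    simp only [Set.mem_setOf_eq] at *
    simp [Pi.smul_apply, smul_eq_mul, mul_assoc, ← Finset.mul_sum, hx y hy]

/-! The dot product on `K^n` has Gram matrix `1`. If `L = L^⊥`, then `dim L = k` with `n = 2k`,
and a basis of `L` extended by a basis of a complement gives the Gram matrix `[[0, M], [Mᵀ, N]]`
of determinant `(-1)^k (det M)^2`. Gram determinants in two bases differ by the square of the
change-of-basis determinant, so `(-1)^k` is a square in `K`. Since `-1` is not a square in `𝔽₃`,
`k` is even and `4 ∣ n`. -/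

open Module Matrix LinearMap

theorem Matrix.det_fromBlocks_zero_transpose {m R : Type*} [Fintype m] [DecidableEq m] [CommRing R]
    (M N : Matrix m m R) :
    (fromBlocks 0 M Mᵀ N).det = (-1) ^ Fintype.card m * M.det ^ 2 := by
  have hfactor : fromBlocks 0 M Mᵀ N = fromBlocks 0 1 1 1 * fromBlocks Mᵀ (N - M) 0 M := by
    simp [fromBlocks_multiply]
  rw [hfactor, det_mul, det_fromBlocks_one₂₂, det_fromBlocks_zero₂₁, det_transpose]
  simp only [mul_one, zero_sub, det_neg, det_one]
  ring

namespace LinearMap.BilinForm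

section CommRing

variable {R M ι κ : Type*} [CommRing R] [AddCommGroup M] [Module R M]
  [Fintype ι] [DecidableEq ι] [Fintype κ] [DecidableEq κ]

theorem det_toMatrix_eq_det_sq_mul (b c : Basis ι R M) (B : LinearMap.BilinForm R M) :
    (toMatrix c B).det = (b.toMatrix c).det ^ 2 * (toMatrix b B).det := by
  rw [← toMatrix_mul_basis_toMatrix b c B, det_mul, det_mul, det_transpose]
  ring

theorem toMatrix_reindex (b : Basis ι R M) (e : ι ≃ κ) (B : LinearMap.BilinForm R M) :
    toMatrix (b.reindex e) B = reindex e e (toMatrix b B) := by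
  ext i j
  simp [toMatrix_apply]

end CommRing

variable {K V : Type*} [Field K] [AddCommGroup V] [Module K V] [FiniteDimensional K V]
  {B : LinearMap.BilinForm K V} {L : Submodule K V}

theorem exists_basis_det_toMatrix_eq_neg_one_pow_mul_sq (hB : B.IsSymm)
    (hL : L ≤ B.orthogonal L) (hdim : finrank K V = 2 * finrank K L) :
    ∃ (a : Basis (Fin (finrank K L) ⊕ Fin (finrank K L)) K V) (c : K),
      (toMatrix a B).det = (-1) ^ finrank K L * c ^ 2 := by
  obtain ⟨W, hLW⟩ := Submodule.exists_isCompl L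
  have hW : finrank K W = finrank K L := by
    have := Submodule.finrank_add_eq_of_isCompl hLW
    omega
  let bL := Module.finBasis K L
  let bW := Module.finBasisOfFinrankEq K W hW
  let a := (bL.prod bW).map (Submodule.prodEquivOfIsCompl L W hLW)
  let M := Matrix.of fun i j => B (bL i) (bW j)
  have hGram : toMatrix a B = fromBlocks 0 M Mᵀ (Matrix.of fun i j => B (bW i) (bW j)) := by
    ext (i | i) (j | j)
    · simpa [a, toMatrix_apply] using hL (bL j).2 _ (bL i).2
    · simp [a, M, toMatrix_apply]
    · simpa [a, M, toMatrix_apply] using hB.eq _ _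
    · simp [a, toMatrix_apply]
  refine ⟨a, M.det, ?_⟩
  rw [hGram, det_fromBlocks_zero_transpose, Fintype.card_fin]

theorem isSquare_neg_one_pow_mul_det_toMatrix {ι : Type*} [Fintype ι] [DecidableEq ι]
    (hB : B.IsSymm) (hL : L ≤ B.orthogonal L) (hdim : finrank K V = 2 * finrank K L)
    (b : Basis ι K V) : IsSquare ((-1) ^ finrank K L * (toMatrix b B).det) := by
  obtain ⟨a, c, hc⟩ := exists_basis_det_toMatrix_eq_neg_one_pow_mul_sq hB hL hdim
  have e : Fin (finrank K L) ⊕ Fin (finrank K L) ≃ ι :=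
    Fintype.equivOfCardEq (by simp [← finrank_eq_card_basis b, hdim, two_mul])
  rw [det_toMatrix_eq_det_sq_mul (a.reindex e) b, toMatrix_reindex, det_reindex_self, hc]
  have hsign : ((-1 : K) ^ finrank K L) ^ 2 = 1 := by
    rw [← pow_mul, mul_comm, pow_mul, neg_one_sq, one_pow]
  set D := ((a.reindex e).toMatrix b).det
  refine ⟨D * c, ?_⟩
  calc (-1) ^ finrank K L * (D ^ 2 * ((-1) ^ finrank K L * c ^ 2))
      = ((-1 : K) ^ finrank K L) ^ 2 * (D * c) ^ 2 := by ring
    _ = D * c * (D * c) := by rw [hsign]; ring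

theorem finrank_eq_two_mul_of_orthogonal_eq (hB : B.Nondegenerate) (hL : B.orthogonal L = L) :
    finrank K V = 2 * finrank K L := by
  have := finrank_orthogonal hB L
  have := Submodule.finrank_le L
  rw [hL] at *
  omega

theorem four_dvd_finrank_of_orthogonal_eq (hK : ¬IsSquare (-1 : K)) (hB : B.IsSymm)
    (hnd : B.Nondegenerate) {ι : Type*} [Fintype ι] [DecidableEq ι] (b : Basis ι K V)
    (hdet : IsSquare (toMatrix b B).det) (hL : B.orthogonal L = L) :
    4 ∣ finrank K V := by
  have hdim := finrank_eq_two_mul_of_orthogonal_eq hnd hL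
  obtain ⟨s, hs⟩ := isSquare_neg_one_pow_mul_det_toMatrix hB hL.ge hdim b
  obtain ⟨d, hd⟩ := hdet
  have hd0 : d ≠ 0 := by
    rintro rfl
    exact (nondegenerate_iff_det_ne_zero b).mp hnd (by simpa using hd)
  have hsq : IsSquare ((-1 : K) ^ finrank K L) :=
    ⟨s / d, by field_simp; rw [pow_two, pow_two, ← hs, hd]⟩
  obtain ⟨m, hm⟩ : Even (finrank K L) := by
    by_contra hodd
    exact hK (by rwa [(Nat.not_even_iff_odd.mp hodd).neg_one_pow] at hsq)
  omega

end LinearMap.BilinForm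

theorem four_dvd_card_of_orthogonal_toBilin'_one_eq {K ι : Type*} [Field K] [Fintype ι]
    [DecidableEq ι] (hK : ¬IsSquare (-1 : K)) (C : Submodule K (ι → K))
    (hC : (toBilin' (1 : Matrix ι ι K)).orthogonal C = C) : 4 ∣ Fintype.card ι := by
  have hGram : LinearMap.BilinForm.toMatrix (Pi.basisFun K ι) (toBilin' 1) = 1 := by
    rw [LinearMap.BilinForm.toMatrix_basisFun, BilinForm.toMatrix'_toBilin']
  simpa using LinearMap.BilinForm.four_dvd_finrank_of_orthogonal_eq hK
    (isSymm_toBilin'_iff_isSymm.mpr isSymm_one)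
    (LinearMap.BilinForm.nondegenerate_toBilin'_of_det_ne_zero' 1 (by simp)) (Pi.basisFun K ι)
    (by simp [hGram]) hC

theorem dualCode_eq_orthogonal {ι : Type*} [Fintype ι] [DecidableEq ι]
    (C : Submodule (ZMod 3) (ι → ZMod 3)) :
    dualCode C = (toBilin' (1 : Matrix ι ι (ZMod 3))).orthogonal C := by
  ext x
  refine forall₂_congr fun y _ => ?_
  simp only [toBilin'_apply', dotProduct, one_mulVec, mul_comm]

theorem selfDual_length_div_four (n : ℕ) (C : Submodule (ZMod 3) (Fin n → ZMod 3))
    (hC : C = dualCode C) : 4 ∣ n := by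
  have hK : ¬IsSquare (-1 : ZMod 3) := by
    rw [ZMod.exists_sq_eq_neg_one_iff]
    decide
  simpa using four_dvd_card_of_orthogonal_toBilin'_one_eq hK C
    (by rw [← dualCode_eq_orthogonal, ← hC])
end
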